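/- arXiv:1202.3541 — 3 statements merged into one kernel-verified Lean document; each statement's English description precedes it below -/
import Mathlib

section
/- Define the continuous dual Hahn polynomial S_n(x²;a,b,c) by S_n(x²;a,b,c) = (a+b)_n (a+c)_n · ₃F₂(-n, a+ix, a-ix; a+b, a+c; 1) (a terminating sum). Then for all n ≥ 0 and real x, a, b, c with a+b, a+c, b+c not nonpositive integers: (x² + b²)·S_n(x²;a,b+1,c) = (n+a+b)(n+b+c)·S_n(x²;a,b,c) - S_{n+1}(x²;a,b,c). -/
open Finset Complex

/-- Pochhammer symbol `(a)_k = a(a+1)⋯(a+k-1)`. -/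
noncomputable def poch (a : ℂ) (k : ℕ) : ℂ := ∏ j ∈ Finset.range k, (a + j)

/-- Terminating hypergeometric series `₃F₂(-n, A, B; C, D; z)`. -/
noncomputable def F32 (n : ℕ) (A B C D z : ℂ) : ℂ :=
  ∑ k ∈ Finset.range (n + 1),
    poch (-(n : ℂ)) k * poch A k * poch B k / (poch C k * poch D k * (k.factorial : ℂ)) * z ^ k

/-- Continuous dual Hahn polynomial
`S_n(x²;a,b,c) = (a+b)_n (a+c)_n ₃F₂(-n, a+ix, a-ix; a+b, a+c; 1)`. -/
noncomputable def cdHahn (n : ℕ) (x a b c : ℝ) : ℂ :=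
  poch ((a : ℂ) + b) n * poch ((a : ℂ) + c) n *
    F32 n ((a : ℂ) + Complex.I * x) ((a : ℂ) - Complex.I * x) ((a : ℂ) + b) ((a : ℂ) + c) 1

lemma poch_zero' (a : ℂ) : poch a 0 = 1 := by simp [poch]

lemma poch_succ (a : ℂ) (k : ℕ) : poch a (k+1) = poch a k * (a + k) := by
  simp [poch, Finset.prod_range_succ]

lemma poch_succ' (a : ℂ) (k : ℕ) : poch a (k+1) = a * poch (a+1) k := by
  unfold poch
  rw [Finset.prod_range_succ']
  simp only [Nat.cast_zero, add_zero]
  rw [mul_comm]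
  congr 1
  apply Finset.prod_congr rfl
  intro j _
  push_cast
  ring

lemma poch_ne_zero {a : ℂ} (h : ∀ j : ℕ, a + j ≠ 0) (k : ℕ) : poch a k ≠ 0 :=
  Finset.prod_ne_zero_iff.mpr (fun j _ => h j)

lemma poch_neg_self (n : ℕ) : poch (-(n:ℂ)) (n+1) = 0 :=
  Finset.prod_eq_zero (Finset.self_mem_range_succ n) (by simp)

lemma sum_shift_eq (n : ℕ) (W V R : ℕ → ℂ) (hW : W (n+1) = 0)
    (h0 : -V 0 = R 0) (hS : ∀ k : ℕ, W k - V (k+1) = R (k+1)) :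
    (∑ k ∈ Finset.range (n+1+1), W k) - (∑ k ∈ Finset.range (n+1+1), V k)
      = ∑ k ∈ Finset.range (n+1+1), R k := by
  rw [Finset.sum_range_succ W (n+1), hW, add_zero, Finset.sum_range_succ' V (n+1),
    Finset.sum_range_succ' R (n+1), ← h0]
  have h1 : ∑ k ∈ Finset.range (n+1), R (k+1) = ∑ k ∈ Finset.range (n+1), (W k - V (k+1)) :=
    Finset.sum_congr rfl (fun k _ => (hS k).symm)
  rw [h1, Finset.sum_sub_distrib]
  ring


set_option maxHeartbeats 1000000 in
lemma key_step (a b c nn kk u v w q wn f Xk Yk XS YS : ℂ)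
    (hv : v ≠ 0) (hw : w ≠ 0) (hf : f ≠ 0) (hα : a + b ≠ 0)
    (h4 : a + b + 1 + kk ≠ 0) (h5 : a + c + kk ≠ 0) (h6 : kk + 1 ≠ 0) :
    (q * (a+b+nn) * wn * u * Xk * XS * Yk * YS) / ((a+b) * v * w * f)
      - ((a+(kk+1)-b) * (a+(kk+1)+b) * q * (a+b+nn) * wn * u * (-nn+kk) * Xk * XS * Yk * YS)
          / ((a+b) * v * (a+b+1+kk) * w * (a+c+kk) * (kk+1) * f)
    = ((nn+a+b) * (nn+b+c) * q * wn * u * (-nn+kk) * Xk * XS * Yk * YS)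
          / ((a+b) * v * w * (a+c+kk) * (kk+1) * f)
      - (q * (a+b+nn) * wn * (a+c+nn) * (-(nn+1)) * u * Xk * XS * Yk * YS)
          / ((a+b) * v * w * (a+c+kk) * (kk+1) * f) := by
  have hD1 : (a+b) * v * w * f ≠ 0 := by
    exact mul_ne_zero (mul_ne_zero (mul_ne_zero hα hv) hw) hf
  have hD2 : (a+b) * v * (a+b+1+kk) * w * (a+c+kk) * (kk+1) * f ≠ 0 := by
    exact mul_ne_zero (mul_ne_zero (mul_ne_zero (mul_ne_zero (mul_ne_zero
      (mul_ne_zero hα hv) h4) hw) h5) h6) hf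
  have hD3 : (a+b) * v * w * (a+c+kk) * (kk+1) * f ≠ 0 := by
    exact mul_ne_zero (mul_ne_zero (mul_ne_zero (mul_ne_zero
      (mul_ne_zero hα hv) hw) h5) h6) hf
  rw [div_sub_div _ _ hD1 hD2, div_sub_div _ _ hD3 hD3,
    div_eq_div_iff (mul_ne_zero hD1 hD2) (mul_ne_zero hD3 hD3)]
  ring

lemma key_step0 (a b c nn q wn : ℂ) (hα : a + b ≠ 0) :
    -((a + 0 - b) * (a + 0 + b) * (q * (a+b+nn) * wn) / (a+b))
    = (nn+a+b) * (nn+b+c) * (q * wn) - q * (a+b+nn) * (wn * (a+c+nn)) := by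
  rw [neg_eq_iff_eq_neg, div_eq_iff hα]
  ring

set_option maxHeartbeats 1000000 in
lemma key_use (a b c nn kk u v w q wn f Xk Yk XS YS : ℂ)
    (hv : v ≠ 0) (hw : w ≠ 0) (hf : f ≠ 0) (hα : a + b ≠ 0)
    (h4 : a + b + 1 + kk ≠ 0) (h5 : a + c + kk ≠ 0) (h6 : kk + 1 ≠ 0) :
    q * (a + b + nn) / (a + b) * wn * (u * (Xk * XS) * (Yk * YS) / (v * w * f)) -
      (a + (kk + 1) - b) * (a + (kk + 1) + b) *
        (q * (a + b + nn) / (a + b) * wn *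
          (u * (-nn + kk) * (Xk * XS) * (Yk * YS) /
            (v * (a + b + 1 + kk) * (w * (a + c + kk)) * ((kk + 1) * f)))) =
    (nn + a + b) * (nn + b + c) *
        (q * wn *
          (u * (-nn + kk) * (Xk * XS) * (Yk * YS) /
            ((a + b) * v * (w * (a + c + kk)) * ((kk + 1) * f)))) -
      q * (a + b + nn) * (wn * (a + c + nn)) *
        (-(nn + 1) * u * (Xk * XS) * (Yk * YS) /
          ((a + b) * v * (w * (a + c + kk)) * ((kk + 1) * f))) := by
  have e1 : q * (a + b + nn) / (a + b) * wn * (u * (Xk * XS) * (Yk * YS) / (v * w * f))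
      = (q * (a+b+nn) * wn * u * Xk * XS * Yk * YS) / ((a+b) * v * w * f) := by
    simp only [div_eq_mul_inv, mul_inv]
    ring
  have e2 : (a + (kk + 1) - b) * (a + (kk + 1) + b) *
        (q * (a + b + nn) / (a + b) * wn *
          (u * (-nn + kk) * (Xk * XS) * (Yk * YS) /
            (v * (a + b + 1 + kk) * (w * (a + c + kk)) * ((kk + 1) * f))))
      = ((a+(kk+1)-b) * (a+(kk+1)+b) * q * (a+b+nn) * wn * u * (-nn+kk) * Xk * XS * Yk * YS)
          / ((a+b) * v * (a+b+1+kk) * w * (a+c+kk) * (kk+1) * f) := by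
    simp only [div_eq_mul_inv, mul_inv]
    ring
  have e3 : (nn + a + b) * (nn + b + c) *
        (q * wn *
          (u * (-nn + kk) * (Xk * XS) * (Yk * YS) /
            ((a + b) * v * (w * (a + c + kk)) * ((kk + 1) * f))))
      = ((nn+a+b) * (nn+b+c) * q * wn * u * (-nn+kk) * Xk * XS * Yk * YS)
          / ((a+b) * v * w * (a+c+kk) * (kk+1) * f) := by
    simp only [div_eq_mul_inv, mul_inv]
    ring
  have e4 : q * (a + b + nn) * (wn * (a + c + nn)) *
        (-(nn + 1) * u * (Xk * XS) * (Yk * YS) /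
          ((a + b) * v * (w * (a + c + kk)) * ((kk + 1) * f)))
      = (q * (a+b+nn) * wn * (a+c+nn) * (-(nn+1)) * u * Xk * XS * Yk * YS)
          / ((a+b) * v * w * (a+c+kk) * (kk+1) * f) := by
    simp only [div_eq_mul_inv, mul_inv]
    ring
  rw [e1, e2, e3, e4]
  exact key_step a b c nn kk u v w q wn f Xk Yk XS YS hv hw hf hα h4 h5 h6

set_option maxHeartbeats 1000000 in
/-- Difference relation
`(x²+b²)·S_n(x²;a,b+1,c) = (n+a+b)(n+b+c)·S_n(x²;a,b,c) - S_{n+1}(x²;a,b,c)`. -/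
theorem cdHahn_difference_relation_one (n : ℕ) (x a b c : ℝ)
    (hab : ∀ m : ℕ, a + b ≠ -(m : ℝ)) (hac : ∀ m : ℕ, a + c ≠ -(m : ℝ))
    (hbc : ∀ m : ℕ, b + c ≠ -(m : ℝ)) :
    ((x : ℂ) ^ 2 + (b : ℂ) ^ 2) * cdHahn n x a (b + 1) c =
      ((n : ℂ) + a + b) * ((n : ℂ) + b + c) * cdHahn n x a b c - cdHahn (n + 1) x a b c := by
  have hαj : ∀ j : ℕ, ((a:ℂ) + ↑b) + ↑j ≠ 0 := by
    intro j h
    apply hab j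
    have h1 : ((a + b + j : ℝ) : ℂ) = 0 := by push_cast; linear_combination h
    have h2 : a + b + (j:ℝ) = 0 := by exact_mod_cast h1
    linarith
  have hα1j : ∀ j : ℕ, ((a:ℂ) + ↑b + 1) + ↑j ≠ 0 := by
    intro j h
    apply hab (j+1)
    have h1 : ((a + b + (j+1) : ℝ) : ℂ) = 0 := by push_cast; linear_combination h
    have h2 : a + b + ((j:ℝ)+1) = 0 := by exact_mod_cast h1
    push_cast
    linarith
  have hγj : ∀ j : ℕ, ((a:ℂ) + ↑c) + ↑j ≠ 0 := by
    intro j h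
    apply hac j
    have h1 : ((a + c + j : ℝ) : ℂ) = 0 := by push_cast; linear_combination h
    have h2 : a + c + (j:ℝ) = 0 := by exact_mod_cast h1
    linarith
  have hα0 : ((a:ℂ) + ↑b) ≠ 0 := by simpa using hαj 0
  have hvk : ∀ k : ℕ, poch ((a:ℂ) + ↑b + 1) k ≠ 0 := poch_ne_zero hα1j
  have hwk : ∀ k : ℕ, poch ((a:ℂ) + ↑c) k ≠ 0 := poch_ne_zero hγj
  have hfk : ∀ k : ℕ, ((k.factorial : ℕ) : ℂ) ≠ 0 :=
    fun (k : ℕ) => Nat.cast_ne_zero.mpr k.factorial_ne_zero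
  have hk1 : ∀ k : ℕ, ((k:ℂ) + 1) ≠ 0 := by
    intro k
    exact_mod_cast Nat.succ_ne_zero k
  have hxy : ∀ k : ℕ, ((x:ℂ)^2 + (b:ℂ)^2)
      = (((a:ℂ) + Complex.I * ↑x) + ↑k) * (((a:ℂ) - Complex.I * ↑x) + ↑k)
        - ((a:ℂ) + ↑k - ↑b) * ((a:ℂ) + ↑k + ↑b) := by
    intro k
    linear_combination (x:ℂ)^2 * Complex.I_sq
  have hr : poch ((a:ℂ) + ↑b + 1) n
      = poch ((a:ℂ) + ↑b) n * ((a:ℂ) + ↑b + ↑n) / ((a:ℂ) + ↑b) := by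
    rw [eq_div_iff hα0]
    have h1 := poch_succ' ((a:ℂ) + ↑b) n
    have h2 := poch_succ ((a:ℂ) + ↑b) n
    linear_combination h2 - h1
  unfold cdHahn F32
  push_cast
  simp only [one_pow, mul_one]
  rw [show (a:ℂ) + (↑b + 1) = (a:ℂ) + ↑b + 1 from by ring]
  rw [poch_succ ((a:ℂ) + ↑b) n, poch_succ ((a:ℂ) + ↑c) n, hr]
  have E1 : (∑ k ∈ Finset.range (n+1+1), poch (-(n:ℂ)) k * poch ((a:ℂ) + Complex.I * (x:ℂ)) k * poch ((a:ℂ) - Complex.I * (x:ℂ)) k / (poch ((a:ℂ) + (b:ℂ) + 1) k * poch ((a:ℂ) + (c:ℂ)) k * (k.factorial:ℂ)))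
      = ∑ k ∈ Finset.range (n+1), poch (-(n:ℂ)) k * poch ((a:ℂ) + Complex.I * (x:ℂ)) k * poch ((a:ℂ) - Complex.I * (x:ℂ)) k / (poch ((a:ℂ) + (b:ℂ) + 1) k * poch ((a:ℂ) + (c:ℂ)) k * (k.factorial:ℂ)) := by
    rw [Finset.sum_range_succ]
    simp [poch_neg_self n]
  have E2 : (∑ k ∈ Finset.range (n+1+1), poch (-(n:ℂ)) k * poch ((a:ℂ) + Complex.I * (x:ℂ)) k * poch ((a:ℂ) - Complex.I * (x:ℂ)) k / (poch ((a:ℂ) + (b:ℂ)) k * poch ((a:ℂ) + (c:ℂ)) k * (k.factorial:ℂ)))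
      = ∑ k ∈ Finset.range (n+1), poch (-(n:ℂ)) k * poch ((a:ℂ) + Complex.I * (x:ℂ)) k * poch ((a:ℂ) - Complex.I * (x:ℂ)) k / (poch ((a:ℂ) + (b:ℂ)) k * poch ((a:ℂ) + (c:ℂ)) k * (k.factorial:ℂ)) := by
    rw [Finset.sum_range_succ]
    simp [poch_neg_self n]
  rw [← E1, ← E2]
  have hW0 : (fun (k : ℕ) => (poch ((a:ℂ) + (b:ℂ)) n * ((a:ℂ) + (b:ℂ) + (n:ℂ)) / ((a:ℂ) + (b:ℂ)) * poch ((a:ℂ) + (c:ℂ)) n) * (poch (-(n:ℂ)) k * (poch ((a:ℂ) + Complex.I * (x:ℂ)) k * (((a:ℂ) + Complex.I * (x:ℂ)) + (k:ℂ))) * (poch ((a:ℂ) - Complex.I * (x:ℂ)) k * (((a:ℂ) - Complex.I * (x:ℂ)) + (k:ℂ))) / (poch ((a:ℂ) + (b:ℂ) + 1) k * poch ((a:ℂ) + (c:ℂ)) k * (k.factorial:ℂ)))) (n+1) = 0 := by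
    simp [poch_neg_self n]
  have h0 : -((fun (k : ℕ) => ((a:ℂ) + (k:ℂ) - (b:ℂ)) * ((a:ℂ) + (k:ℂ) + (b:ℂ)) * ((poch ((a:ℂ) + (b:ℂ)) n * ((a:ℂ) + (b:ℂ) + (n:ℂ)) / ((a:ℂ) + (b:ℂ)) * poch ((a:ℂ) + (c:ℂ)) n) * (poch (-(n:ℂ)) k * poch ((a:ℂ) + Complex.I * (x:ℂ)) k * poch ((a:ℂ) - Complex.I * (x:ℂ)) k / (poch ((a:ℂ) + (b:ℂ) + 1) k * poch ((a:ℂ) + (c:ℂ)) k * (k.factorial:ℂ))))) 0) = (fun (k : ℕ) => ((n:ℂ) + (a:ℂ) + (b:ℂ)) * ((n:ℂ) + (b:ℂ) + (c:ℂ)) * (poch ((a:ℂ) + (b:ℂ)) n * poch ((a:ℂ) + (c:ℂ)) n * (poch (-(n:ℂ)) k * poch ((a:ℂ) + Complex.I * (x:ℂ)) k * poch ((a:ℂ) - Complex.I * (x:ℂ)) k / (poch ((a:ℂ) + (b:ℂ)) k * poch ((a:ℂ) + (c:ℂ)) k * (k.factorial:ℂ)))) - poch ((a:ℂ) + (b:ℂ))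 n * ((a:ℂ) + (b:ℂ) + (n:ℂ)) * (poch ((a:ℂ) + (c:ℂ)) n * ((a:ℂ) + (c:ℂ) + (n:ℂ))) * (poch (-((n:ℂ)+1)) k * poch ((a:ℂ) + Complex.I * (x:ℂ)) k * poch ((a:ℂ) - Complex.I * (x:ℂ)) k / (poch ((a:ℂ) + (b:ℂ)) k * poch ((a:ℂ) + (c:ℂ)) k * (k.factorial:ℂ)))) 0 := by
    simp only [poch_zero', Nat.factorial_zero, Nat.cast_one, Nat.cast_zero]
    linear_combination key_step0 (a:ℂ) (b:ℂ) (c:ℂ) (n:ℂ) (poch ((a:ℂ)+(b:ℂ)) n)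
      (poch ((a:ℂ)+(c:ℂ)) n) hα0
  have hS : ∀ k : ℕ, (fun (k : ℕ) => (poch ((a:ℂ) + (b:ℂ)) n * ((a:ℂ) + (b:ℂ) + (n:ℂ)) / ((a:ℂ) + (b:ℂ)) * poch ((a:ℂ) + (c:ℂ)) n) * (poch (-(n:ℂ)) k * (poch ((a:ℂ) + Complex.I * (x:ℂ)) k * (((a:ℂ) + Complex.I * (x:ℂ)) + (k:ℂ))) * (poch ((a:ℂ) - Complex.I * (x:ℂ)) k * (((a:ℂ) - Complex.I * (x:ℂ)) + (k:ℂ))) / (poch ((a:ℂ) + (b:ℂ) + 1) k * poch ((a:ℂ) + (c:ℂ)) k * (k.factorial:ℂ)))) k - (fun (k : ℕ) => ((a:ℂ) + (k:ℂ) - (b:ℂ)) * ((a:ℂ) + (k:ℂ) + (b:ℂ)) * ((poch ((a:ℂ) + (b:ℂ)) n * ((a:ℂ) + (b:ℂ) + (n:ℂ)) / ((a:ℂ) + (b:ℂ)) * poch ((a:ℂ) + (c:ℂ)) n) * (poch (-(n:ℂ)) k * poch ((a:ℂ) + Complex.I * (x:ℂ)) k * poch ((a:ℂ) - Complex.I *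 (x:ℂ)) k / (poch ((a:ℂ) + (b:ℂ) + 1) k * poch ((a:ℂ) + (c:ℂ)) k * (k.factorial:ℂ))))) (k+1) = (fun (k : ℕ) => ((n:ℂ) + (a:ℂ) + (b:ℂ)) * ((n:ℂ) + (b:ℂ) + (c:ℂ)) * (poch ((a:ℂ) + (b:ℂ)) n * poch ((a:ℂ) + (c:ℂ)) n * (poch (-(n:ℂ)) k * poch ((a:ℂ) + Complex.I * (x:ℂ)) k * poch ((a:ℂ) - Complex.I * (x:ℂ)) k / (poch ((a:ℂ) + (b:ℂ)) k * poch ((a:ℂ) + (c:ℂ)) k * (k.factorial:ℂ)))) - poch ((a:ℂ) + (b:ℂ)) n * ((a:ℂ) + (b:ℂ) + (n:ℂ)) * (poch ((a:ℂ) + (c:ℂ)) n * ((a:ℂ) + (c:ℂ) + (n:ℂ))) * (poch (-((n:ℂ)+1)) k * poch ((a:ℂ) + Complex.I * (x:ℂ)) k * poch ((a:ℂ) - Complex.I * (x:ℂ)) k / (poch ((a:ℂ) + (b:ℂ)) k * poch ((a:ℂ) + (c:ℂ)) k * (k.factorial:ℂ)))) (k+1) := by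
    intro k
    simp only []
    have h1 := hvk k; have h2 := hwk k; have h3 := hfk k; have h4 := hα1j k
    have h5 := hγj k; have h6 := hk1 k
    rw [poch_succ (-(n:ℂ)) k, poch_succ ((a:ℂ) + Complex.I * (x:ℂ)) k, poch_succ ((a:ℂ) - Complex.I * (x:ℂ)) k,
      poch_succ ((a:ℂ) + (b:ℂ) + 1) k, poch_succ ((a:ℂ) + (c:ℂ)) k,
      poch_succ' ((a:ℂ) + (b:ℂ)) k, poch_succ' (-((n:ℂ)+1)) k,
      show (-((n:ℂ)+1)+1) = -(n:ℂ) from by ring, Nat.factorial_succ k]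
    push_cast
    generalize hu : poch (-(n:ℂ)) k = u
    generalize hvv : poch ((a:ℂ) + (b:ℂ) + 1) k = v
    generalize hww : poch ((a:ℂ) + (c:ℂ)) k = w
    generalize hq : poch ((a:ℂ) + (b:ℂ)) n = q
    generalize hwn : poch ((a:ℂ) + (c:ℂ)) n = wn
    generalize hff : (k.factorial : ℂ) = f
    generalize hXk : poch ((a:ℂ) + Complex.I * (x:ℂ)) k = Xk
    generalize hYk : poch ((a:ℂ) - Complex.I * (x:ℂ)) k = Yk
    rw [hvv] at h1; rw [hww] at h2; rw [hff] at h3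
    exact key_use (a:ℂ) (b:ℂ) (c:ℂ) (n:ℂ) (k:ℂ) u v w q wn f Xk Yk
      ((a:ℂ) + Complex.I * (x:ℂ) + (k:ℂ)) ((a:ℂ) - Complex.I * (x:ℂ) + (k:ℂ))
      h1 h2 h3 hα0 h4 h5 h6
  trans ((∑ k ∈ Finset.range (n+1+1), (poch ((a:ℂ) + (b:ℂ)) n * ((a:ℂ) + (b:ℂ) + (n:ℂ)) / ((a:ℂ) + (b:ℂ)) * poch ((a:ℂ) + (c:ℂ)) n) * (poch (-(n:ℂ)) k * (poch ((a:ℂ) + Complex.I * (x:ℂ)) k * (((a:ℂ) + Complex.I * (x:ℂ)) + (k:ℂ))) * (poch ((a:ℂ) - Complex.I * (x:ℂ)) k * (((a:ℂ) - Complex.I * (x:ℂ)) + (k:ℂ))) / (poch ((a:ℂ) + (b:ℂ) + 1) k * poch ((a:ℂ) + (c:ℂ)) k * (k.factorial:ℂ)))) - ∑ k ∈ Finset.range (n+1+1), ((a:ℂ) + (k:ℂ) - (b:ℂ)) * ((a:ℂ) + (k:ℂ) + (b:ℂ)) * ((poch ((a:ℂ) + (b:ℂ)) n * ((a:ℂ)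 + (b:ℂ) + (n:ℂ)) / ((a:ℂ) + (b:ℂ)) * poch ((a:ℂ) + (c:ℂ)) n) * (poch (-(n:ℂ)) k * poch ((a:ℂ) + Complex.I * (x:ℂ)) k * poch ((a:ℂ) - Complex.I * (x:ℂ)) k / (poch ((a:ℂ) + (b:ℂ) + 1) k * poch ((a:ℂ) + (c:ℂ)) k * (k.factorial:ℂ)))))
  · rw [← Finset.sum_sub_distrib, Finset.mul_sum, Finset.mul_sum]
    apply Finset.sum_congr rfl
    intro k _
    linear_combination ((poch ((a:ℂ) + (b:ℂ)) n * ((a:ℂ) + (b:ℂ) + (n:ℂ)) / ((a:ℂ) + (b:ℂ)) * poch ((a:ℂ) + (c:ℂ)) n) * (poch (-(n:ℂ)) k * poch ((a:ℂ) + Complex.I * (x:ℂ)) k * poch ((a:ℂ) - Complex.I * (x:ℂ)) k / (poch ((a:ℂ) + (b:ℂ) + 1) k * poch ((a:ℂ) + (c:ℂ)) k * (k.factorial:ℂ)))) * hxy k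
  · rw [sum_shift_eq n (fun (k : ℕ) => (poch ((a:ℂ) + (b:ℂ)) n * ((a:ℂ) + (b:ℂ) + (n:ℂ)) / ((a:ℂ) + (b:ℂ)) * poch ((a:ℂ) + (c:ℂ)) n) * (poch (-(n:ℂ)) k * (poch ((a:ℂ) + Complex.I * (x:ℂ)) k * (((a:ℂ) + Complex.I * (x:ℂ)) + (k:ℂ))) * (poch ((a:ℂ) - Complex.I * (x:ℂ)) k * (((a:ℂ) - Complex.I * (x:ℂ)) + (k:ℂ))) / (poch ((a:ℂ) + (b:ℂ) + 1) k * poch ((a:ℂ) + (c:ℂ)) k * (k.factorial:ℂ)))) (fun (k : ℕ) => ((a:ℂ) + (k:ℂ) - (b:ℂ)) * ((a:ℂ) + (k:ℂ) + (b:ℂ)) * ((poch ((a:ℂ) + (b:ℂ)) n * ((a:ℂ) + (b:ℂ) + (n:ℂ)) / ((a:ℂ) + (b:ℂ)) * poch ((a:ℂ) + (c:ℂ)) n) * (poch (-(n:ℂ)) k * poch ((a:ℂ) + Complex.I * (x:ℂ)) k * poch ((a:ℂ) - Complex.I * (x:ℂ)) k / (poch ((a:ℂ) + (b:ℂ) +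 1) k * poch ((a:ℂ) + (c:ℂ)) k * (k.factorial:ℂ))))) (fun (k : ℕ) => ((n:ℂ) + (a:ℂ) + (b:ℂ)) * ((n:ℂ) + (b:ℂ) + (c:ℂ)) * (poch ((a:ℂ) + (b:ℂ)) n * poch ((a:ℂ) + (c:ℂ)) n * (poch (-(n:ℂ)) k * poch ((a:ℂ) + Complex.I * (x:ℂ)) k * poch ((a:ℂ) - Complex.I * (x:ℂ)) k / (poch ((a:ℂ) + (b:ℂ)) k * poch ((a:ℂ) + (c:ℂ)) k * (k.factorial:ℂ)))) - poch ((a:ℂ) + (b:ℂ)) n * ((a:ℂ) + (b:ℂ) + (n:ℂ)) * (poch ((a:ℂ) + (c:ℂ)) n * ((a:ℂ) + (c:ℂ) + (n:ℂ))) * (poch (-((n:ℂ)+1)) k * poch ((a:ℂ) + Complex.I * (x:ℂ)) k * poch ((a:ℂ) - Complex.I * (x:ℂ)) k / (poch ((a:ℂ) + (b:ℂ)) k * poch ((a:ℂ) + (c:ℂ)) k * (k.factorial:ℂ)))) hW0 h0 hS]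
    rw [Finset.mul_sum, Finset.mul_sum, Finset.mul_sum, ← Finset.sum_sub_distrib]
end

section
/- S_n(x²;a,b,c) is symmetric in its parameters: for all nonnegative integers n and all x, the polynomial S_n(x²;a,b,c) defined by (a+b)_n (a+c)_n · ₃F₂(-n, a+ix, a-ix; a+b, a+c; 1) is invariant under any permutation of (a,b,c); in particular S_n(x²;a,b,c) = S_n(x²;b,a,c). -/
open Finset Complex

/-!
Clearing denominators, `S_n = ∑ₖ (-1)ᵏ C(n,k) (a+y)ₖ (a-y)ₖ (a+b+k)ₙ₋ₖ (a+c+k)ₙ₋ₖ`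
with `y = ix`, which is visibly symmetric in `b` and `c`. For the transposition of `a`
and `b`, expand `(a+c+k)ₙ₋ₖ = ((a-y+k) + (c+y))ₙ₋ₖ` by Vandermonde's convolution, collect
the terms by `m = k + j` and sum over `k` by Chu–Vandermonde: the result
`∑ₘ C(n,m) (a-y)ₘ (b-y)ₘ (c+y)ₙ₋ₘ (a+b+m)ₙ₋ₘ` is symmetric in `a` and `b`.
-/

open Polynomial

lemma poch_eq_eval_ascPochhammer (z : ℂ) (k : ℕ) : poch z k = (ascPochhammer ℂ k).eval z := by
  induction k with
  | zero => simp [poch]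
  | succ k ih => rw [poch, prod_range_succ, ← poch, ih, ascPochhammer_succ_eval]

lemma poch_add (z : ℂ) (k j : ℕ) : poch z (k + j) = poch z k * poch (z + k) j := by
  simp only [poch_eq_eval_ascPochhammer, ← ascPochhammer_mul, eval_mul, eval_comp, eval_add,
    eval_X, eval_natCast]

lemma poch_eq_mul_poch_add {k n : ℕ} (hk : k ≤ n) (z : ℂ) :
    poch z n = poch z k * poch (z + k) (n - k) := by
  rw [← poch_add, Nat.add_sub_cancel' hk]

lemma poch_neg (z : ℂ) (k : ℕ) : poch (-z) k = (-1) ^ k * poch (z - k + 1) k := by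
  rw [poch_eq_eval_ascPochhammer, poch_eq_eval_ascPochhammer,
    ascPochhammer_eval_neg_eq_descPochhammer, descPochhammer_eval_eq_ascPochhammer]

lemma poch_neg_natCast (n k : ℕ) : poch (-n) k = (-1) ^ k * k.factorial * n.choose k := by
  rw [poch_eq_eval_ascPochhammer, ascPochhammer_eval_neg_eq_descPochhammer,
    descPochhammer_eval_eq_descFactorial, Nat.descFactorial_eq_factorial_mul_choose]
  push_cast
  ring

lemma poch_ne_zero_s4 {z : ℂ} (h : ∀ m : ℕ, z ≠ -m) (n : ℕ) : poch z n ≠ 0 := by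
  rw [poch_eq_eval_ascPochhammer, Ne, ascPochhammer_eval_eq_zero_iff]
  rintro ⟨m, -, hm⟩
  exact h m (by rw [hm, neg_neg])

lemma descPochhammer_smeval_eq_poch (z : ℂ) (k : ℕ) :
    (descPochhammer ℤ k).smeval z = (-1) ^ k * poch (-z) k := by
  rw [descPochhammer_smeval_eq_ascPochhammer, ascPochhammer_smeval_eq_eval,
    ← poch_eq_eval_ascPochhammer, poch_neg, ← mul_assoc, ← mul_pow]
  norm_num

lemma poch_add_eq_sum (z w : ℂ) (m : ℕ) :
    poch (z + w) m = ∑ j ∈ range (m + 1), m.choose j * poch z j * poch w (m - j) := by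
  have h := Ring.descPochhammer_smeval_add m (Commute.all (-z) (-w))
  simp only [descPochhammer_smeval_eq_poch, neg_neg, ← neg_add] at h
  rw [← Nat.sum_antidiagonal_eq_sum_range_succ
    (fun i j => (m.choose i : ℂ) * poch z i * poch w j)]
  calc poch (z + w) m = (-1) ^ m * ((-1) ^ m * poch (z + w) m) := by
        rw [← mul_assoc, ← mul_pow]; norm_num
    _ = _ := by
        rw [h, mul_sum]
        refine sum_congr rfl fun ⟨i, j⟩ hij => ?_
        have hsq : ∀ i : ℕ, ((-1 : ℂ) ^ i) ^ 2 = 1 := fun i => by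
          rw [← pow_mul, pow_mul']; norm_num
        rw [← mem_antidiagonal.mp hij, pow_add]
        set c : ℂ := (i + j).choose i * poch z i * poch w j
        linear_combination (c * ((-1) ^ j) ^ 2) * hsq i + c * hsq j

/-- Chu–Vandermonde: the reflection `(C+k)ₘ₋ₖ = (-1)ᵐ⁻ᵏ (1-C-m)ₘ₋ₖ` turns it into
Vandermonde's convolution. -/
lemma sum_neg_one_pow_mul_choose_mul_poch (m : ℕ) (B C : ℂ) :
    ∑ k ∈ range (m + 1), (-1) ^ k * m.choose k * poch B k * poch (C + k) (m - k)
      = poch (C - B) m := by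
  calc _ = ∑ k ∈ range (m + 1),
          (-1) ^ m * (m.choose k * poch B k * poch (1 - C - m) (m - k)) := by
        refine sum_congr rfl fun k hk => ?_
        have hk : k ≤ m := Nat.lt_succ_iff.mp (mem_range.mp hk)
        have reflect : poch (C + k) (m - k) = (-1) ^ (m - k) * poch (1 - C - m) (m - k) := by
          rw [← neg_neg (C + k), poch_neg, Nat.cast_sub hk]
          ring_nf
        rw [reflect, ← Nat.add_sub_cancel' hk, pow_add, Nat.add_sub_cancel_left]
        ring
    _ = (-1) ^ m * poch (B + (1 - C - m)) m := by rw [← mul_sum, poch_add_eq_sum]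
    _ = poch (C - B) m := by
        rw [show C - B = -(B - C) by ring, poch_neg]
        ring_nf

lemma F32_swap_denominators (n : ℕ) (A B C D z : ℂ) : F32 n A B C D z = F32 n A B D C z := by
  simp only [F32, mul_comm (poch C _)]

lemma poch_mul_poch_mul_F32_one {n : ℕ} {C D : ℂ} (hC : poch C n ≠ 0) (hD : poch D n ≠ 0)
    (A B : ℂ) :
    poch C n * poch D n * F32 n A B C D 1 = ∑ k ∈ range (n + 1),
      (-1) ^ k * n.choose k * poch A k * poch B k
        * poch (C + k) (n - k) * poch (D + k) (n - k) := by
  rw [F32, mul_sum]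
  refine sum_congr rfl fun k hk => ?_
  have hk : k ≤ n := Nat.lt_succ_iff.mp (mem_range.mp hk)
  rw [poch_eq_mul_poch_add hk] at hC hD
  rw [poch_eq_mul_poch_add hk C, poch_eq_mul_poch_add hk D, poch_neg_natCast, one_pow]
  field_simp [left_ne_zero_of_mul hC, left_ne_zero_of_mul hD, k.factorial_ne_zero]

/-- `S_n(x²;a,b,c)` with its denominators cleared, as a polynomial in `y = ix`. -/
noncomputable def cdHahnSum (n : ℕ) (y a b c : ℂ) : ℂ :=
  ∑ k ∈ range (n + 1), (-1) ^ k * n.choose k * poch (a + y) k * poch (a - y) k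
    * poch (a + b + k) (n - k) * poch (a + c + k) (n - k)

lemma cdHahn_eq_cdHahnSum {n : ℕ} {a b c : ℝ} (hab : ∀ m : ℕ, a + b ≠ -(m : ℝ))
    (hac : ∀ m : ℕ, a + c ≠ -(m : ℝ)) (x : ℝ) : cdHahn n x a b c = cdHahnSum n (I * x) a b c := by
  have hne : ∀ r s : ℝ, (∀ m : ℕ, r + s ≠ -(m : ℝ)) → poch ((r : ℂ) + s) n ≠ 0 :=
    fun r s h => poch_ne_zero_s4 (fun m hm => h m (by exact_mod_cast hm)) n
  rw [cdHahn, poch_mul_poch_mul_F32_one (hne a b hab) (hne a c hac), cdHahnSum]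

lemma cdHahnSum_eq (n : ℕ) (y a b c : ℂ) :
    cdHahnSum n y a b c = ∑ m ∈ range (n + 1),
      n.choose m * poch (a - y) m * poch (b - y) m
        * poch (c + y) (n - m) * poch (a + b + m) (n - m) := by
  have expand : ∀ k ∈ range (n + 1),
      (-1 : ℂ) ^ k * n.choose k * poch (a + y) k * poch (a - y) k
        * poch (a + b + k) (n - k) * poch (a + c + k) (n - k)
      = ∑ j ∈ range (n + 1 - k), (-1 : ℂ) ^ k * n.choose k * (n - k).choose j * poch (a + y) k
          * poch (a - y) (k + j) * poch (c + y) (n - k - j) * poch (a + b + k) (n - k) := by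
    intro k hk
    have hk : k ≤ n := Nat.lt_succ_iff.mp (mem_range.mp hk)
    rw [show a + c + k = (a - y + k) + (c + y) by ring, poch_add_eq_sum (a - y + k),
      Nat.sub_add_comm hk, mul_sum]
    refine sum_congr rfl fun j _ => ?_
    rw [poch_add]
    ring
  rw [cdHahnSum, sum_congr rfl expand, ← sum_range_diag_flip]
  refine sum_congr rfl fun m hm => ?_
  have hm : m ≤ n := Nat.lt_succ_iff.mp (mem_range.mp hm)
  have regroup : ∀ k ∈ range (m + 1),
      (-1 : ℂ) ^ k * n.choose k * (n - k).choose (m - k) * poch (a + y) k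
          * poch (a - y) (k + (m - k)) * poch (c + y) (n - k - (m - k)) * poch (a + b + k) (n - k)
      = n.choose m * poch (a - y) m * poch (c + y) (n - m) * poch (a + b + m) (n - m)
          * ((-1) ^ k * m.choose k * poch (a + y) k * poch (a + b + k) (m - k)) := by
    intro k hk
    have hk : k ≤ m := Nat.lt_succ_iff.mp (mem_range.mp hk)
    have hchoose : (n.choose k * (n - k).choose (m - k) : ℂ) = n.choose m * m.choose k := by
      exact_mod_cast (Nat.choose_mul (n := n) hk).symm
    have hcast : a + b + k + ((m - k : ℕ) : ℂ) = a + b + m := by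
      push_cast [Nat.cast_sub hk]; ring
    rw [Nat.add_sub_cancel' hk, Nat.sub_sub_sub_cancel_right hk,
      poch_eq_mul_poch_add (Nat.sub_le_sub_right hm k) (a + b + k), Nat.sub_sub_sub_cancel_right hk,
      hcast]
    linear_combination ((-1) ^ k * poch (a + y) k * poch (a - y) m * poch (c + y) (n - m)
      * poch (a + b + k) (m - k) * poch (a + b + m) (n - m)) * hchoose
  rw [sum_congr rfl regroup, ← mul_sum, sum_neg_one_pow_mul_choose_mul_poch,
    show a + b - (a + y) = b - y by ring]
  ring

lemma cdHahnSum_swap (n : ℕ) (y a b c : ℂ) : cdHahnSum n y a b c = cdHahnSum n y b a c := by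
  rw [cdHahnSum_eq, cdHahnSum_eq, add_comm b a]
  exact sum_congr rfl fun m _ => by ring

/-- The continuous dual Hahn polynomial `S_n(x²;a,b,c)` is symmetric in the
parameters `(a,b,c)`: both transpositions (which generate all permutations)
leave it invariant; in particular `S_n(x²;a,b,c) = S_n(x²;b,a,c)`. -/
theorem cdHahn_symmetric (n : ℕ) (x a b c : ℝ)
    (hab : ∀ m : ℕ, a + b ≠ -(m : ℝ)) (hac : ∀ m : ℕ, a + c ≠ -(m : ℝ))
    (hbc : ∀ m : ℕ, b + c ≠ -(m : ℝ)) :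
    cdHahn n x a b c = cdHahn n x b a c ∧ cdHahn n x a b c = cdHahn n x a c b := by
  have hba : ∀ m : ℕ, b + a ≠ -(m : ℝ) := fun m => add_comm a b ▸ hab m
  refine ⟨?_, ?_⟩
  · rw [cdHahn_eq_cdHahnSum hab hac, cdHahn_eq_cdHahnSum hba hbc, cdHahnSum_swap]
  · rw [cdHahn, cdHahn, F32_swap_denominators, mul_comm (poch ((a : ℂ) + b) n)]
end

section
/- Define operators on the complex Hilbert space ℓ² with orthonormal basis e_n (n ≥ 0), for real a, c > 0: R e_n = (-1)^n e_n; J₀ e_n = (n+a+c-1/2) e_n; J₊ e_n = √((n+2a)(n+2c)) e_{n+1} if n even, √((n+1)(n+2a+2c-1)) e_{n+1} if n odd; J₋ e_0 = 0 and J₋ e_n = √(n(n+2a+2c-2)) e_{n-1} if n ≥ 2 even, √((n+2a-1)(n+2c-1)) e_{n-1} if n odd. Then on each basis vector: [J₀,J₊] = J₊, [J₀,J₋] = -J₋, [J₊,J₋] = -2J₀ - γR with γ = (2a-1)(2c-1), R² = 1, RJ₀ = J₀R, RJ₊ + J₊R = 0, and RJ₋ + J₋R = 0. -/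
open Finset

/-- Basis vector `e n` of the space of finitely supported complex sequences. -/
noncomputable def e (n : ℕ) : ℕ →₀ ℂ := Finsupp.single n 1

/-- Linear extension of an action on basis vectors. -/
noncomputable def ext (f : ℕ → (ℕ →₀ ℂ)) : (ℕ →₀ ℂ) → (ℕ →₀ ℂ) :=
  fun v => v.sum fun n cn => cn • f n

/-- The reflection operator: `R e_n = (-1)^n e_n`. -/
noncomputable def Rop : (ℕ →₀ ℂ) → (ℕ →₀ ℂ) :=
  ext fun n => ((-1 : ℂ) ^ n) • e n

/-- `J₀ e_n = (n + a + c - 1/2) e_n`. -/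
noncomputable def J0 (a c : ℝ) : (ℕ →₀ ℂ) → (ℕ →₀ ℂ) :=
  ext fun n => (((n : ℂ) + a + c - 1 / 2)) • e n

/-- `J₊ e_n = √((n+2a)(n+2c)) e_{n+1}` for even `n`,
    `J₊ e_n = √((n+1)(n+2a+2c-1)) e_{n+1}` for odd `n`. -/
noncomputable def Jp (a c : ℝ) : (ℕ →₀ ℂ) → (ℕ →₀ ℂ) :=
  ext fun n =>
    if n % 2 = 0 then
      ((Real.sqrt ((n + 2 * a) * (n + 2 * c)) : ℂ)) • e (n + 1)
    else
      ((Real.sqrt ((n + 1) * (n + 2 * a + 2 * c - 1)) : ℂ)) • e (n + 1)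

/-- `J₋ e_0 = 0`, `J₋ e_n = √(n(n+2a+2c-2)) e_{n-1}` for even `n ≥ 2`,
    `J₋ e_n = √((n+2a-1)(n+2c-1)) e_{n-1}` for odd `n`. -/
noncomputable def Jm (a c : ℝ) : (ℕ →₀ ℂ) → (ℕ →₀ ℂ) :=
  ext fun n =>
    if n = 0 then 0
    else if n % 2 = 0 then
      ((Real.sqrt ((n : ℝ) * (n + 2 * a + 2 * c - 2)) : ℂ)) • e (n - 1)
    else
      ((Real.sqrt ((n + 2 * a - 1) * (n + 2 * c - 1)) : ℂ)) • e (n - 1)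

lemma ext_e (f : ℕ → (ℕ →₀ ℂ)) (n : ℕ) : ext f (e n) = f n := by
  simp [_root_.ext, e, Finsupp.sum_single_index]

lemma ext_smul_e (f : ℕ → (ℕ →₀ ℂ)) (n : ℕ) (z : ℂ) : ext f (z • e n) = z • f n := by
  simp [_root_.ext, e, Finsupp.smul_single, Finsupp.sum_single_index]

lemma ext_rsmul_e (f : ℕ → (ℕ →₀ ℂ)) (n : ℕ) (r : ℝ) : ext f (r • e n) = r • f n := by
  simp [_root_.ext, e, Finsupp.smul_single, Finsupp.sum_single_index, Complex.real_smul]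

lemma ext_zero (f : ℕ → (ℕ →₀ ℂ)) : ext f 0 = 0 := by simp [_root_.ext]

lemma csqrt_mul_csqrt {x y : ℝ} (hx : 0 ≤ x) (h : y = x) :
    (Real.sqrt x : ℂ) * (Real.sqrt y : ℂ) = (x : ℂ) := by
  subst h; rw [← Complex.ofReal_mul, Real.mul_self_sqrt hx]

/-- On each basis vector of the representation space, the operators `R`, `J₀`,
`J₊`, `J₋` satisfy the defining relations of the deformed algebra `su(1,1)_γ`
with `γ = (2a-1)(2c-1)`:
`[J₀,J₊] = J₊`, `[J₀,J₋] = -J₋`, `[J₊,J₋] = -2J₀ - γR`, `R² = 1`,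
`[R,J₀] = 0`, `{R,J₊} = 0`, `{R,J₋} = 0`. -/
theorem su11_gamma_relations (a c : ℝ) (ha : 0 < a) (hc : 0 < c) (n : ℕ) :
    J0 a c (Jp a c (e n)) - Jp a c (J0 a c (e n)) = Jp a c (e n) ∧
    J0 a c (Jm a c (e n)) - Jm a c (J0 a c (e n)) = -(Jm a c (e n)) ∧
    Jp a c (Jm a c (e n)) - Jm a c (Jp a c (e n)) =
      (-2 : ℂ) • J0 a c (e n) - (((2 * a - 1) * (2 * c - 1) : ℝ) : ℂ) • Rop (e n) ∧
    Rop (Rop (e n)) = e n ∧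
    Rop (J0 a c (e n)) = J0 a c (Rop (e n)) ∧
    Rop (Jp a c (e n)) + Jp a c (Rop (e n)) = 0 ∧
    Rop (Jm a c (e n)) + Jm a c (Rop (e n)) = 0 := by
  refine ⟨?_, ?_, ?_, ?_, ?_, ?_, ?_⟩
  · -- [J0, Jp] = Jp
    rcases Nat.even_or_odd n with hn | hn
    · rw [Nat.even_iff] at hn
      simp [J0, Jp, ext_e, ext_smul_e, ext_rsmul_e, hn,
        -Real.sqrt_mul, -Real.sqrt_mul', Complex.coe_algebraMap]
      module
    · rw [Nat.odd_iff] at hn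
      simp [J0, Jp, ext_e, ext_smul_e, ext_rsmul_e, hn,
        -Real.sqrt_mul, -Real.sqrt_mul', Complex.coe_algebraMap]
      module
  · -- [J0, Jm] = -Jm
    rcases n with _ | m
    · simp [J0, Jm, ext_e, ext_smul_e, ext_rsmul_e, ext_zero]
    · rcases Nat.even_or_odd m with hm | hm
      · rw [Nat.even_iff] at hm
        have h1 : (m+1) % 2 = 1 := by omega
        simp [J0, Jm, ext_e, ext_smul_e, ext_rsmul_e, ext_zero, hm, h1,
          -Real.sqrt_mul, -Real.sqrt_mul', Complex.coe_algebraMap]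
        module
      · rw [Nat.odd_iff] at hm
        have h1 : (m+1) % 2 = 0 := by omega
        simp [J0, Jm, ext_e, ext_smul_e, ext_rsmul_e, ext_zero, hm, h1,
          -Real.sqrt_mul, -Real.sqrt_mul', Complex.coe_algebraMap]
        module
  · -- [Jp, Jm] = -2 J0 - γ R
    have hm0 : (0:ℝ) ≤ n := Nat.cast_nonneg n
    rcases n with _ | m
    · simp [Jm, Jp, J0, Rop, ext_e, ext_smul_e, ext_rsmul_e, ext_zero,
        -Real.sqrt_mul, -Real.sqrt_mul', Complex.coe_algebraMap]
      match_scalars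
      try simp only [Complex.coe_algebraMap]
      have k1 : ((Real.sqrt (2*a*(2*c)) : ℝ) : ℂ) * (Real.sqrt (2*a*(2*c)) : ℝ) =
          ((2*a*(2*c) : ℝ) : ℂ) :=
        csqrt_mul_csqrt (by nlinarith) rfl
      push_cast at k1 ⊢
      linear_combination -k1
    · have hm0 : (0:ℝ) ≤ m := Nat.cast_nonneg m
      rcases Nat.even_or_odd m with hm | hm
      · rw [Nat.even_iff] at hm
        have h1 : (m+1) % 2 = 1 := by omega
        have h2 : (m+2) % 2 = 0 := by omega
        have hpow : ((-1:ℂ))^(m+1) = -1 := Odd.neg_one_pow (Nat.odd_iff.2 h1)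
        simp [Jm, Jp, J0, Rop, ext_e, ext_smul_e, ext_rsmul_e, ext_zero, hm, h1, h2, hpow,
          -Real.sqrt_mul, -Real.sqrt_mul', Complex.coe_algebraMap]
        match_scalars
        try simp only [Complex.coe_algebraMap]
        have k1 : ((Real.sqrt (((m:ℝ)+1+2*a-1)*((m:ℝ)+1+2*c-1)) : ℝ) : ℂ) *
            (Real.sqrt (((m:ℝ)+2*a)*((m:ℝ)+2*c)) : ℝ) =
            (((((m:ℝ)+1+2*a-1)*((m:ℝ)+1+2*c-1)) : ℝ) : ℂ) :=
          csqrt_mul_csqrt (by nlinarith) (by ring)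
        have k2 : ((Real.sqrt (((m:ℝ)+1+1)*((m:ℝ)+1+2*a+2*c-1)) : ℝ) : ℂ) *
            (Real.sqrt (((m:ℝ)+1+1)*((m:ℝ)+1+1+2*a+2*c-2)) : ℝ) =
            (((((m:ℝ)+1+1)*((m:ℝ)+1+2*a+2*c-1)) : ℝ) : ℂ) :=
          csqrt_mul_csqrt (by nlinarith) (by ring)
        push_cast at k1 k2 ⊢
        linear_combination k1 - k2
      · rw [Nat.odd_iff] at hm
        have h1 : (m+1) % 2 = 0 := by omega
        have h2 : (m+2) % 2 = 1 := by omega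
        have hpow : ((-1:ℂ))^(m+1) = 1 := Even.neg_one_pow (Nat.even_iff.2 h1)
        simp [Jm, Jp, J0, Rop, ext_e, ext_smul_e, ext_rsmul_e, ext_zero, hm, h1, h2, hpow,
          -Real.sqrt_mul, -Real.sqrt_mul', Complex.coe_algebraMap]
        match_scalars
        try simp only [Complex.coe_algebraMap]
        have hm1 : (1:ℝ) ≤ (m:ℝ) := by exact_mod_cast Nat.one_le_iff_ne_zero.2 (by omega)
        have k1 : ((Real.sqrt (((m:ℝ)+1)*((m:ℝ)+1+2*a+2*c-2)) : ℝ) : ℂ) *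
            (Real.sqrt (((m:ℝ)+1)*((m:ℝ)+2*a+2*c-1)) : ℝ) =
            (((((m:ℝ)+1)*((m:ℝ)+1+2*a+2*c-2)) : ℝ) : ℂ) :=
          csqrt_mul_csqrt (by nlinarith) (by ring)
        have k2 : ((Real.sqrt (((m:ℝ)+1+2*a)*((m:ℝ)+1+2*c)) : ℝ) : ℂ) *
            (Real.sqrt (((m:ℝ)+1+1+2*a-1)*((m:ℝ)+1+1+2*c-1)) : ℝ) =
            (((((m:ℝ)+1+2*a)*((m:ℝ)+1+2*c)) : ℝ) : ℂ) :=
          csqrt_mul_csqrt (by nlinarith) (by ring)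
        push_cast at k1 k2 ⊢
        linear_combination k1 - k2
  · -- R² = 1
    simp [Rop, ext_e, ext_smul_e, smul_smul, ← mul_pow]
  · -- R J0 = J0 R
    simp [Rop, J0, ext_e, ext_smul_e, smul_smul, mul_comm]
  · -- {R, Jp} = 0
    rcases Nat.even_or_odd n with hn | hn
    · rw [Nat.even_iff] at hn
      have h1 : (n+1) % 2 = 1 := by omega
      simp [Rop, Jp, ext_e, ext_smul_e, ext_rsmul_e, hn, h1,
        -Real.sqrt_mul, -Real.sqrt_mul', Complex.coe_algebraMap]
      module
    · rw [Nat.odd_iff] at hn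
      have h1 : (n+1) % 2 = 0 := by omega
      simp [Rop, Jp, ext_e, ext_smul_e, ext_rsmul_e, hn, h1,
        -Real.sqrt_mul, -Real.sqrt_mul', Complex.coe_algebraMap]
      module
  · -- {R, Jm} = 0
    rcases n with _ | m
    · simp [Rop, Jm, ext_e, ext_smul_e, ext_rsmul_e, ext_zero]
    · rcases Nat.even_or_odd m with hm | hm
      · rw [Nat.even_iff] at hm
        have h1 : (m+1) % 2 = 1 := by omega
        simp [Rop, Jm, ext_e, ext_smul_e, ext_rsmul_e, ext_zero, hm, h1,
          -Real.sqrt_mul, -Real.sqrt_mul', Complex.coe_algebraMap]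
        module
      · rw [Nat.odd_iff] at hm
        have h1 : (m+1) % 2 = 0 := by omega
        simp [Rop, Jm, ext_e, ext_smul_e, ext_rsmul_e, ext_zero, hm, h1,
          -Real.sqrt_mul, -Real.sqrt_mul', Complex.coe_algebraMap]
        module
end
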